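/- For X uniform on the unit circle and any random variable K taking at most 2 values (possibly depending on X and independent auxiliary randomness), E[‖X - E[X|K]‖²] ≥ 1 - 4/π². -/

import Mathlib

/-!
Since `E[X | K]` is a function of `K`, it is constant on the two atoms `{K = 0}` and `{K = 1}`.
On an atom `A` of probability `p`, no constant `a` beats the mean:
`∫_A ‖X - a‖² ≥ p - ‖∫_A X‖² / p`. Among events of probability `p`, an arc of length `2πp`
maximises `‖∫_A X‖`: comparing `⟪u, X⟫` with the threshold `cos (πp)` gives
`‖∫_A X‖ ≤ sin (πp) / π`. Summing over the two atoms, the loss is at most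
`sin² (πp) / (π² p (1 - p)) ≤ 4 / π²` by Jordan's inequality.
-/

open Real MeasureTheory

noncomputable def circlePoint (θ : ℝ) : EuclideanSpace ℝ (Fin 2) :=
  (WithLp.equiv 2 (Fin 2 → ℝ)).symm ![Real.cos θ, Real.sin θ]

open ProbabilityTheory
open scoped RealInnerProductSpace

lemma sin_pi_mul_sq_le_four_mul_mul_one_sub {p : ℝ} (hp0 : 0 ≤ p) (hp1 : p ≤ 1) :
    sin (π * p) ^ 2 ≤ 4 * p * (1 - p) := by
  obtain ⟨y, rfl⟩ : ∃ y, p = y + 1 / 2 := ⟨p - 1 / 2, by ring⟩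
  have hy : |π * y| ≤ π / 2 := by
    have : |y| ≤ 1 / 2 := abs_le.mpr ⟨by linarith, by linarith⟩
    rw [abs_mul, abs_of_pos pi_pos]
    nlinarith [pi_pos]
  have hjordan : 2 / π * |π * y| ≤ |sin (π * y)| := mul_abs_le_abs_sin hy
  rw [abs_mul, abs_of_pos pi_pos, ← mul_assoc, div_mul_cancel₀ _ pi_ne_zero] at hjordan
  have hsq : (2 * |y|) ^ 2 ≤ sin (π * y) ^ 2 := by
    simpa only [sq_abs] using pow_le_pow_left₀ (by positivity) hjordan 2
  rw [mul_add, mul_one_div, sin_add_pi_div_two, cos_sq']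
  nlinarith [sq_abs y]

lemma sin_pi_mul_sq_div_add_div_le {p : ℝ} (hp0 : 0 ≤ p) (hp1 : p ≤ 1) :
    sin (π * p) ^ 2 / (π ^ 2 * p) + sin (π * p) ^ 2 / (π ^ 2 * (1 - p)) ≤ 4 / π ^ 2 := by
  rcases hp0.eq_or_lt with rfl | hp0
  · simp
    positivity
  rcases hp1.eq_or_lt with rfl | hp1
  · simp
    positivity
  have hq : 0 < 1 - p := by linarith
  have hsum : sin (π * p) ^ 2 / (π ^ 2 * p) + sin (π * p) ^ 2 / (π ^ 2 * (1 - p))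
      = sin (π * p) ^ 2 / (p * (1 - p)) / π ^ 2 := by
    field_simp
    ring
  rw [hsum]
  gcongr
  rw [div_le_iff₀ (by positivity)]
  linarith [sin_pi_mul_sq_le_four_mul_mul_one_sub hp0.le hp1.le]

lemma integral_max_cos_sub_cos {a : ℝ} (ha0 : 0 ≤ a) (haπ : a ≤ π) :
    ∫ t in -π..π, max (cos t - cos a) 0 = 2 * sin a - 2 * a * cos a := by
  have hf (u v : ℝ) : IntervalIntegrable (fun t => max (cos t - cos a) 0) volume u v :=
    (by fun_prop : Continuous fun t => max (cos t - cos a) 0).intervalIntegrable u v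
  have hout {t : ℝ} (h1 : a ≤ |t|) (h2 : |t| ≤ π) : max (cos t - cos a) 0 = 0 := by
    rw [← cos_abs t]
    exact max_eq_right (sub_nonpos.mpr (cos_le_cos_of_nonneg_of_le_pi ha0 h2 h1))
  have hin {t : ℝ} (h : |t| ≤ a) : max (cos t - cos a) 0 = cos t - cos a := by
    rw [← cos_abs t]
    exact max_eq_left (sub_nonneg.mpr (cos_le_cos_of_nonneg_of_le_pi (abs_nonneg t) haπ h))
  rw [← intervalIntegral.integral_add_adjacent_intervals (hf (-π) (-a)) (hf (-a) π),
    ← intervalIntegral.integral_add_adjacent_intervals (hf (-a) a) (hf a π),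
    intervalIntegral.integral_congr (g := fun _ => 0) fun t ht => hout ?_ ?_,
    intervalIntegral.integral_congr (g := fun t => cos t - cos a) fun t ht => hin ?_,
    intervalIntegral.integral_congr (g := fun _ => 0) fun t ht => hout ?_ ?_]
  · simp [integral_cos]
    ring
  all_goals rw [Set.uIcc_of_le (by linarith)] at ht
  · exact le_abs.mpr (Or.inl ht.1)
  · exact abs_le.mpr ⟨by linarith [ht.1], ht.2⟩
  · exact abs_le.mpr ht
  · exact le_abs.mpr (Or.inr (by linarith [ht.2]))
  · exact abs_le.mpr ⟨ht.1, by linarith [ht.2]⟩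

lemma inner_circlePoint_left (φ : ℝ) (v : EuclideanSpace ℝ (Fin 2)) :
    ⟪circlePoint φ, v⟫ = cos φ * v 0 + sin φ * v 1 := by
  simp [circlePoint, PiLp.inner_apply, Fin.sum_univ_two, mul_comm]

lemma inner_circlePoint (φ θ : ℝ) : ⟪circlePoint φ, circlePoint θ⟫ = cos (θ - φ) := by
  rw [inner_circlePoint_left, cos_sub]
  simp [circlePoint, mul_comm]

lemma norm_circlePoint (θ : ℝ) : ‖circlePoint θ‖ = 1 := by
  simp [EuclideanSpace.norm_eq, circlePoint, Fin.sum_univ_two]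

lemma continuous_circlePoint : Continuous circlePoint :=
  (PiLp.continuous_toLp 2 _).comp <| continuous_pi fun i => by
    fin_cases i
    exacts [continuous_cos, continuous_sin]

lemma exists_inner_circlePoint_eq_norm (v : EuclideanSpace ℝ (Fin 2)) :
    ∃ φ, ⟪circlePoint φ, v⟫ = ‖v‖ := by
  rcases eq_or_ne v 0 with rfl | hv
  · simp
  set z := Complex.orthonormalBasisOneI.repr.symm v
  have hz : ‖z‖ = ‖v‖ := LinearIsometryEquiv.norm_map _ v
  have hre : ‖v‖ * cos z.arg = v 0 := by rw [← hz, Complex.norm_mul_cos_arg]; simp [z]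
  have him : ‖v‖ * sin z.arg = v 1 := by rw [← hz, Complex.norm_mul_sin_arg]; simp [z]
  have hv2 : ‖v‖ ^ 2 = v 0 ^ 2 + v 1 ^ 2 := by
    simp [EuclideanSpace.norm_sq_eq, Fin.sum_univ_two]
  refine ⟨z.arg, mul_left_cancel₀ (norm_ne_zero_iff.mpr hv) ?_⟩
  rw [inner_circlePoint_left]
  linear_combination v 0 * hre + v 1 * him - hv2

noncomputable def uniformCircle : Measure (EuclideanSpace ℝ (Fin 2)) :=
  Measure.map circlePoint
    ((ENNReal.ofReal (2 * π))⁻¹ • volume.restrict (Set.Ico (0 : ℝ) (2 * π)))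

lemma ae_norm_eq_one_uniformCircle : ∀ᵐ x ∂uniformCircle, ‖x‖ = 1 := by
  refine (ae_map_iff continuous_circlePoint.aemeasurable ?_).mpr ?_
  · exact measurableSet_eq_fun measurable_norm measurable_const
  · exact .of_forall norm_circlePoint

lemma integral_uniformCircle {g : EuclideanSpace ℝ (Fin 2) → ℝ} (hg : Continuous g) :
    ∫ x, g x ∂uniformCircle = (2 * π)⁻¹ * ∫ θ in 0..2 * π, g (circlePoint θ) := by
  rw [uniformCircle, integral_map continuous_circlePoint.aemeasurable hg.aestronglyMeasurable,
    integral_smul_measure, ENNReal.toReal_inv, ENNReal.toReal_ofReal two_pi_pos.le,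
    intervalIntegral.integral_of_le two_pi_pos.le, integral_Icc_eq_integral_Ioc.symm.trans
      integral_Icc_eq_integral_Ico]
  rfl

lemma integral_uniformCircle_comp_inner (φ : ℝ) {g : ℝ → ℝ} (hg : Continuous g) :
    ∫ x, g ⟪circlePoint φ, x⟫ ∂uniformCircle = (2 * π)⁻¹ * ∫ t in -π..π, g (cos t) := by
  have hper : Function.Periodic (fun θ => g (cos (θ - φ))) (2 * π) := fun θ => by
    simp only [add_sub_right_comm, cos_add_two_pi]
  rw [integral_uniformCircle (g := fun x => g ⟪circlePoint φ, x⟫) (by fun_prop)]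
  simp only [inner_circlePoint]
  have h := hper.intervalIntegral_add_eq 0 (φ - π)
  rw [zero_add] at h
  rw [h, intervalIntegral.integral_comp_sub_right (fun t => g (cos t))]
  ring_nf

section
variable {Ω : Type*} [MeasurableSpace Ω]

lemma setIntegral_le_integral_max_sub_add {μ : Measure Ω} [IsFiniteMeasure μ] {f : Ω → ℝ}
    (hf : Integrable f μ) (A : Set Ω) (c : ℝ) :
    ∫ ω in A, f ω ∂μ ≤ ∫ ω, max (f ω - c) 0 ∂μ + c * μ.real A := by
  have hpos : Integrable (fun ω => max (f ω - c) 0) μ := (hf.sub (integrable_const c)).pos_part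
  calc ∫ ω in A, f ω ∂μ ≤ ∫ ω in A, (max (f ω - c) 0 + c) ∂μ :=
        setIntegral_mono hf.integrableOn (hpos.integrableOn.add (integrable_const c))
          fun ω => by linarith [le_max_left (f ω - c) 0]
    _ = ∫ ω in A, max (f ω - c) 0 ∂μ + c * μ.real A := by
        rw [integral_add hpos.integrableOn (integrable_const c), setIntegral_const, smul_eq_mul,
          mul_comm]
    _ ≤ ∫ ω, max (f ω - c) 0 ∂μ + c * μ.real A := by
        gcongr
        · exact .of_forall fun ω => le_max_right _ _
        · exact Measure.restrict_le_self

lemma integral_norm_sq_sub_le_integral_norm_sub_sq {E : Type*} [NormedAddCommGroup E]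
    [InnerProductSpace ℝ E] [CompleteSpace E] {ν : Measure Ω} [IsFiniteMeasure ν] {X : Ω → E}
    (hX : MemLp X 2 ν) (a : E) :
    ∫ ω, ‖X ω‖ ^ 2 ∂ν - ‖∫ ω, X ω ∂ν‖ ^ 2 / ν.real Set.univ ≤ ∫ ω, ‖X ω - a‖ ^ 2 ∂ν := by
  rcases eq_zero_or_neZero ν with rfl | hν
  · simp
  set v := ∫ ω, X ω ∂ν
  set m := ν.real Set.univ
  have hm : 0 < m := measureReal_univ_pos
  have hint : Integrable X ν := hX.integrable one_le_two
  have hsq : Integrable (fun ω => ‖X ω‖ ^ 2) ν := hX.integrable_norm_pow two_ne_zero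
  have hinner : Integrable (fun ω => 2 * ⟪a, X ω⟫) ν := (hint.const_inner a).const_mul 2
  have hexpand : ∫ ω, ‖X ω - a‖ ^ 2 ∂ν = ∫ ω, ‖X ω‖ ^ 2 ∂ν - 2 * ⟪a, v⟫ + ‖a‖ ^ 2 * m := by
    have h (ω : Ω) : ‖X ω - a‖ ^ 2 = ‖X ω‖ ^ 2 - 2 * ⟪a, X ω⟫ + ‖a‖ ^ 2 := by
      rw [norm_sub_sq_real, real_inner_comm]
    simp_rw [h]
    rw [integral_add (f := fun ω => ‖X ω‖ ^ 2 - 2 * ⟪a, X ω⟫) (hsq.sub hinner)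
      (integrable_const _), integral_sub hsq hinner,
      integral_const_mul, integral_inner hint, integral_const, smul_eq_mul]
    ring
  have hcs : ⟪a, v⟫ ≤ ‖a‖ * ‖v‖ := real_inner_le_norm a v
  have hamgm : 2 * ‖a‖ * ‖v‖ ≤ ‖v‖ ^ 2 / m + ‖a‖ ^ 2 * m := by
    rw [div_add' _ _ _ hm.ne', le_div_iff₀ hm]
    nlinarith [sq_nonneg (‖v‖ - ‖a‖ * m)]
  rw [hexpand]
  linarith

end

namespace ProbabilityTheory.HasLaw

variable {Ω : Type*} [MeasurableSpace Ω] {μ : Measure Ω} {X : Ω → EuclideanSpace ℝ (Fin 2)}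

lemma ae_norm_eq_one (hX : HasLaw X uniformCircle μ) : ∀ᵐ ω ∂μ, ‖X ω‖ = 1 :=
  ae_of_ae_map hX.aemeasurable (hX.map_eq ▸ ae_norm_eq_one_uniformCircle)

lemma memLp_of_uniformCircle [IsFiniteMeasure μ] (hX : HasLaw X uniformCircle μ)
    (p : ENNReal) : MemLp X p μ :=
  .of_bound hX.aemeasurable.aestronglyMeasurable 1 (hX.ae_norm_eq_one.mono fun _ h => h.le)

lemma norm_setIntegral_le_sin_div_pi [IsProbabilityMeasure μ] (hX : HasLaw X uniformCircle μ)
    (A : Set Ω) : ‖∫ ω in A, X ω ∂μ‖ ≤ sin (π * μ.real A) / π := by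
  obtain ⟨φ, hφ⟩ := exists_inner_circlePoint_eq_norm (∫ ω in A, X ω ∂μ)
  set p := μ.real A
  -- the arc `{x | ⟪circlePoint φ, x⟫ ≥ c}` has mass exactly `p`, so the bound is sharp for it
  set c := cos (π * p)
  have hp0 : 0 ≤ p := measureReal_nonneg
  have hp1 : p ≤ 1 := measureReal_le_one
  have hint : Integrable X μ := (hX.memLp_of_uniformCircle 1).integrable le_rfl
  have hlaw : ∫ ω, max (⟪circlePoint φ, X ω⟫ - c) 0 ∂μ
      = ∫ x, max (⟪circlePoint φ, x⟫ - c) 0 ∂uniformCircle :=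
    hX.integral_comp (f := fun x => max (⟪circlePoint φ, x⟫ - c) 0)
      (by fun_prop : Continuous _).aestronglyMeasurable
  calc ‖∫ ω in A, X ω ∂μ‖ = ∫ ω in A, ⟪circlePoint φ, X ω⟫ ∂μ := by
        rw [← hφ, integral_inner hint.integrableOn]
    _ ≤ ∫ ω, max (⟪circlePoint φ, X ω⟫ - c) 0 ∂μ + c * p :=
        setIntegral_le_integral_max_sub_add (hint.const_inner _) A c
    _ = (2 * π)⁻¹ * (2 * sin (π * p) - 2 * (π * p) * c) + c * p := by
        rw [hlaw, integral_uniformCircle_comp_inner φ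
            (by fun_prop : Continuous fun t => max (t - c) 0),
          integral_max_cos_sub_cos (by positivity) (by nlinarith [pi_pos])]
    _ = sin (π * p) / π := by
        field_simp
        ring

lemma measureReal_sub_le_setIntegral_norm_sub_sq [IsProbabilityMeasure μ]
    (hX : HasLaw X uniformCircle μ) (A : Set Ω) (a : EuclideanSpace ℝ (Fin 2)) :
    μ.real A - sin (π * μ.real A) ^ 2 / (π ^ 2 * μ.real A) ≤ ∫ ω in A, ‖X ω - a‖ ^ 2 ∂μ := by
  have hnorm : ∫ ω in A, ‖X ω‖ ^ 2 ∂μ = μ.real A := by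
    rw [integral_congr_ae (g := fun _ => (1 : ℝ)) ((ae_restrict_of_ae hX.ae_norm_eq_one).mono
      fun ω (h : ‖X ω‖ = 1) => by simp [h]), setIntegral_const, smul_eq_mul, mul_one]
  have hvar := integral_norm_sq_sub_le_integral_norm_sub_sq
    ((hX.memLp_of_uniformCircle 2).restrict A) a
  rw [hnorm, measureReal_restrict_apply_univ] at hvar
  have harc : ‖∫ ω in A, X ω ∂μ‖ ^ 2 ≤ (sin (π * μ.real A) / π) ^ 2 :=
    pow_le_pow_left₀ (norm_nonneg _) (hX.norm_setIntegral_le_sin_div_pi A) 2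
  have hdiv := div_le_div_of_nonneg_right harc (measureReal_nonneg (μ := μ) (s := A))
  rw [div_pow, div_div] at hdiv
  linarith

end ProbabilityTheory.HasLaw

/-- For `X` uniform on the unit circle and any random variable `K` taking at most two
values, `E[‖X - E[X|K]‖²] ≥ 1 - 4/π²`. -/
theorem stmt_12 {Ω : Type*} [MeasurableSpace Ω]
    (μ : Measure Ω) [IsProbabilityMeasure μ]
    (X : Ω → EuclideanSpace ℝ (Fin 2)) (hX : Measurable X)
    (hXlaw : Measure.map X μ
      = Measure.map circlePoint
          ((ENNReal.ofReal (2 * π))⁻¹ • volume.restrict (Set.Ico (0 : ℝ) (2 * π))))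
    (K : Ω → ℕ) (hK : Measurable K) (hK2 : ∀ ω, K ω < 2) :
    ∫ ω, ‖X ω - (μ[X | MeasurableSpace.comap K ⊤]) ω‖ ^ 2 ∂μ ≥ 1 - 4 / π ^ 2 := by
  classical
  have hlaw : HasLaw X uniformCircle μ := ⟨hX.aemeasurable, hXlaw⟩
  obtain ⟨g, -, hg⟩ := (stronglyMeasurable_condExp (m := MeasurableSpace.comap K ⊤) (μ := μ)
    (f := X)).exists_eq_measurable_comp
  set A := K ⁻¹' {0}
  have hA : MeasurableSet A := hK (measurableSet_singleton 0)
  have hpiece : (fun ω => ‖X ω - g (K ω)‖ ^ 2)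
      = A.piecewise (fun ω => ‖X ω - g 0‖ ^ 2) (fun ω => ‖X ω - g 1‖ ^ 2) := by
    ext ω
    have := hK2 ω
    interval_cases h : K ω <;> simp [A, h]
  have hint (a : EuclideanSpace ℝ (Fin 2)) : Integrable (fun ω => ‖X ω - a‖ ^ 2) μ :=
    ((hlaw.memLp_of_uniformCircle 2).sub (memLp_const a)).integrable_norm_pow two_ne_zero
  have h0 := hlaw.measureReal_sub_le_setIntegral_norm_sub_sq A (g 0)
  have h1 := hlaw.measureReal_sub_le_setIntegral_norm_sub_sq Aᶜ (g 1)
  rw [probReal_compl_eq_one_sub hA, mul_one_sub, sin_pi_sub] at h1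
  have hsin := sin_pi_mul_sq_div_add_div_le (p := μ.real A) measureReal_nonneg measureReal_le_one
  rw [hg, ge_iff_le]
  simp only [Function.comp_apply]
  rw [hpiece, integral_piecewise hA (hint _).integrableOn (hint _).integrableOn]
  linarith
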